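/- arXiv:2202.04217 — 5 statements merged into one kernel-verified Lean document; each statement's English description precedes it below -/
import Mathlib

section
/- Let ε, a, b ∈ ℂ and x ∈ ℂ with x ≠ 0. Let u : ℂ → ℂ be twice differentiable at ix with u(ix) ≠ 0, and suppose u''(ix) = u'(ix)²/u(ix) − u'(ix)/(ix) + (−8εu(ix)² + 2ab)/(ix) + b²/u(ix). Then the function v(z) := i·u(iz) satisfies v''(x) = v'(x)²/v(x) − v'(x)/x + (−8εv(x)² + 2(−a)b)/x + b²/v(x). In other words, the substitution u ↦ iu, x ↦ ix takes solutions of the Painlevé-III (D7) equation in Kitaev–Vartanian form with parameters (ε, a, b) to solutions with parameters (ε, −a, b). -/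
/-!
For `v z = i u (i z)` the chain rule gives `v' x = -u'(ix)` and `v'' x = -i u''(ix)`.
Multiplying the right-hand side of the equation for `u` at `ix` by `-i` yields exactly the
right-hand side for `v` at `x`, except that the term `2ab/(ix)` picks up a sign, i.e. `a` becomes `-a`.
-/

open Complex

/-- Right-hand side of Painlevé-III (D7) at `x`; `u` and `u'` stand for the values `u x`, `u' x`. -/
noncomputable def painleveIIID7Rhs (ε a b x u u' : ℂ) : ℂ :=
  u' ^ 2 / u - u' / x + (-8 * ε * u ^ 2 + 2 * a * b) / x + b ^ 2 / u

lemma deriv_I_mul_comp_I_mul (f : ℂ → ℂ) :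
    deriv (fun z => I * f (I * z)) = fun z => -deriv f (I * z) := by
  funext z
  rw [deriv_const_mul_field, deriv_comp_mul_left, smul_eq_mul, ← mul_assoc, I_mul_I, neg_one_mul]

lemma deriv_neg_comp_I_mul (f : ℂ → ℂ) (z : ℂ) :
    deriv (fun w => -f (I * w)) z = -I * deriv f (I * z) := by
  rw [deriv.fun_neg, deriv_comp_mul_left, smul_eq_mul, neg_mul]

lemma neg_I_mul_painleveIIID7Rhs_I_mul (ε a b x u u' : ℂ) :
    -I * painleveIIID7Rhs ε a b (I * x) u u' =
      painleveIIID7Rhs ε (-a) b x (I * u) (-u') := by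
  simp only [painleveIIID7Rhs, div_eq_mul_inv, mul_inv, inv_I]
  ring_nf
  simp only [I_sq]
  ring

theorem stmt_2_general (ε a b x : ℂ) (u : ℂ → ℂ)
    (h : deriv (deriv u) (I * x) =
      (deriv u (I * x)) ^ 2 / u (I * x) - deriv u (I * x) / (I * x)
        + (-8 * ε * (u (I * x)) ^ 2 + 2 * a * b) / (I * x) + b ^ 2 / u (I * x)) :
    deriv (deriv fun z => I * u (I * z)) x =
      (deriv (fun z => I * u (I * z)) x) ^ 2 / (I * u (I * x))
        - deriv (fun z => I * u (I * z)) x / x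
        + (-8 * ε * (I * u (I * x)) ^ 2 + 2 * (-a) * b) / x
        + b ^ 2 / (I * u (I * x)) := by
  rw [deriv_I_mul_comp_I_mul, deriv_neg_comp_I_mul, h]
  exact neg_I_mul_painleveIIID7Rhs_I_mul ε a b x (u (I * x)) (deriv u (I * x))

/-- The substitution `u ↦ iu`, `x ↦ ix` takes solutions of the Painlevé-III (D7)
equation in Kitaev–Vartanian form with parameters `(ε, a, b)` to solutions with
parameters `(ε, −a, b)`. -/
theorem stmt_2 (ε a b x : ℂ) (hx : x ≠ 0) (u : ℂ → ℂ)
    (hu : DifferentiableAt ℂ u (I * x))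
    (hu' : DifferentiableAt ℂ (deriv u) (I * x))
    (hux : u (I * x) ≠ 0)
    (h : deriv (deriv u) (I * x) =
      (deriv u (I * x)) ^ 2 / u (I * x) - deriv u (I * x) / (I * x)
        + (-8 * ε * (u (I * x)) ^ 2 + 2 * a * b) / (I * x) + b ^ 2 / u (I * x)) :
    deriv (deriv fun z => I * u (I * z)) x =
      (deriv (fun z => I * u (I * z)) x) ^ 2 / (I * u (I * x))
        - deriv (fun z => I * u (I * z)) x / x
        + (-8 * ε * (I * u (I * x)) ^ 2 + 2 * (-a) * b) / x
        + b ^ 2 / (I * u (I * x)) :=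
  stmt_2_general ε a b x u h
end

section
/- Fix ε, a ∈ ℂ with ε² = 1 and let u, φ : (0,∞) → ℂ be twice differentiable with u nonvanishing. Define p(x) := d/dx[u(x)e^{iφ(x)}/x] and q(x) := d/dx[u(x)e^{−iφ(x)}/x]. Then at each x > 0 where the indicated derivatives exist, the two equations −εx²p'/(4u) + εx²pu'/(4u²) − εxp/(2u) + iεaxp/(2u) − 2ue^{iφ} = 0 and −εx²q'/(4u) + εx²qu'/(4u²) − εxq/(2u) − iεaxq/(2u) − 2ue^{−iφ} = 0 hold simultaneously if and only if both −8εu³ − uu' + x(u')² − 2au²φ' + xu²(φ')² − xuu'' = 0 and uφ'' + u'φ' − 2au'/x + 2au/x² = 0 hold at x. -/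
lemma aux_deriv (c : ℂ) (u φ : ℝ → ℂ)
    (hu : ∀ y : ℝ, 0 < y → DifferentiableAt ℝ u y)
    (hu' : ∀ y : ℝ, 0 < y → DifferentiableAt ℝ (deriv u) y)
    (hφ : ∀ y : ℝ, 0 < y → DifferentiableAt ℝ φ y)
    (hφ' : ∀ y : ℝ, 0 < y → DifferentiableAt ℝ (deriv φ) y)
    (x : ℝ) (hx : 0 < x) (r : ℝ → ℂ)
    (hrdef : r = deriv fun t : ℝ => u t * Complex.exp (c * φ t) / (t : ℂ)) :
    r x = ((deriv u x + c * deriv φ x * u x) * (x : ℂ) - u x) * Complex.exp (c * φ x) / (x : ℂ) ^ 2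
    ∧ deriv r x =
      ((deriv (deriv u) x + c * deriv (deriv φ) x * u x + 2 * c * deriv φ x * deriv u x
          + c ^ 2 * (deriv φ x) ^ 2 * u x) * (x : ℂ) ^ 2
        - 2 * (deriv u x + c * deriv φ x * u x) * (x : ℂ)
        + 2 * u x) * Complex.exp (c * φ x) / (x : ℂ) ^ 3 := by
  have hid : ∀ t : ℝ, HasDerivAt (fun s : ℝ => (s : ℂ)) 1 t := fun t => by
    simpa using (hasDerivAt_id t).ofReal_comp
  have hE : ∀ t : ℝ, 0 < t → HasDerivAt (fun s : ℝ => Complex.exp (c * φ s))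
      (Complex.exp (c * φ t) * (c * deriv φ t)) t := fun t ht =>
    (((hφ t ht).hasDerivAt).const_mul c).cexp
  have key : ∀ t : ℝ, 0 < t → HasDerivAt (fun s : ℝ => u s * Complex.exp (c * φ s) / (s : ℂ))
      (((deriv u t * Complex.exp (c * φ t) + u t * (Complex.exp (c * φ t) * (c * deriv φ t))) * (t : ℂ)
        - u t * Complex.exp (c * φ t) * 1) / (t : ℂ) ^ 2) t := fun t ht => by
    have hne : (t : ℂ) ≠ 0 := by exact_mod_cast ne_of_gt ht
    exact (((hu t ht).hasDerivAt).mul (hE t ht)).div (hid t) hne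
  have hXne : (x : ℂ) ≠ 0 := by exact_mod_cast ne_of_gt hx
  have req : ∀ t : ℝ, 0 < t → r t =
      ((deriv u t * Complex.exp (c * φ t) + u t * (Complex.exp (c * φ t) * (c * deriv φ t))) * (t : ℂ)
        - u t * Complex.exp (c * φ t) * 1) / (t : ℂ) ^ 2 := fun t ht => by
    rw [hrdef]; exact (key t ht).deriv
  constructor
  · rw [req x hx]; field_simp
  · have hev : r =ᶠ[nhds x] fun t : ℝ =>
        ((deriv u t * Complex.exp (c * φ t) + u t * (Complex.exp (c * φ t) * (c * deriv φ t))) * (t : ℂ)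
          - u t * Complex.exp (c * φ t) * 1) / (t : ℂ) ^ 2 := by
      filter_upwards [isOpen_Ioi.mem_nhds (show x ∈ Set.Ioi (0:ℝ) from hx)] with t ht
      exact req t ht
    rw [hev.deriv_eq]
    have hA : HasDerivAt (fun t : ℝ => deriv u t * Complex.exp (c * φ t))
        (deriv (deriv u) x * Complex.exp (c * φ x)
          + deriv u x * (Complex.exp (c * φ x) * (c * deriv φ x))) x :=
      ((hu' x hx).hasDerivAt).mul (hE x hx)
    have hC : HasDerivAt (fun t : ℝ => Complex.exp (c * φ t) * (c * deriv φ t))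
        ((Complex.exp (c * φ x) * (c * deriv φ x)) * (c * deriv φ x)
          + Complex.exp (c * φ x) * (c * deriv (deriv φ) x)) x :=
      (hE x hx).mul (((hφ' x hx).hasDerivAt).const_mul c)
    have hB : HasDerivAt (fun t : ℝ => u t * (Complex.exp (c * φ t) * (c * deriv φ t)))
        (deriv u x * (Complex.exp (c * φ x) * (c * deriv φ x))
          + u x * ((Complex.exp (c * φ x) * (c * deriv φ x)) * (c * deriv φ x)
            + Complex.exp (c * φ x) * (c * deriv (deriv φ) x))) x :=
      ((hu x hx).hasDerivAt).mul hC
    have hNum : HasDerivAt (fun t : ℝ =>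
        (deriv u t * Complex.exp (c * φ t) + u t * (Complex.exp (c * φ t) * (c * deriv φ t))) * (t : ℂ)
          - u t * Complex.exp (c * φ t) * 1)
        (((deriv (deriv u) x * Complex.exp (c * φ x)
            + deriv u x * (Complex.exp (c * φ x) * (c * deriv φ x)))
          + (deriv u x * (Complex.exp (c * φ x) * (c * deriv φ x))
            + u x * ((Complex.exp (c * φ x) * (c * deriv φ x)) * (c * deriv φ x)
              + Complex.exp (c * φ x) * (c * deriv (deriv φ) x)))) * (x : ℂ)
          + (deriv u x * Complex.exp (c * φ x)
            + u x * (Complex.exp (c * φ x) * (c * deriv φ x))) * 1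
          - (deriv u x * Complex.exp (c * φ x)
            + u x * (Complex.exp (c * φ x) * (c * deriv φ x))) * 1) x :=
      ((hA.add hB).mul (hid x)).sub ((((hu x hx).hasDerivAt).mul (hE x hx)).mul_const 1)
    have hX2 : HasDerivAt (fun s : ℝ => ((s : ℂ)) ^ 2) (2 * (x : ℂ)) x := by
      have h2 : HasDerivAt (fun s : ℝ => (s : ℂ) * (s : ℂ)) (1 * (x : ℂ) + (x : ℂ) * 1) x :=
        (hid x).mul (hid x)
      have : (fun s : ℝ => (s : ℂ) * (s : ℂ)) = fun s : ℝ => ((s : ℂ)) ^ 2 := by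
        funext s; ring
      rw [this] at h2
      convert h2 using 1; ring
    have := (hNum.div hX2 (pow_ne_zero 2 hXne)).deriv
    simp only [Pi.div_def] at this
    rw [this]
    field_simp
    ring


set_option maxHeartbeats 2000000 in

/-- After eliminating `p = d/dx(u e^{iφ}/x)` and `q = d/dx(u e^{−iφ}/x)` (valid when
`ε² = 1`), equations (8) and (10) of the Painlevé-III (D7) compatibility system hold
simultaneously at `x > 0` if and only if both
`−8εu³ − uu' + x(u')² − 2au²φ' + xu²(φ')² − xuu'' = 0` and
`uφ'' + u'φ' − 2au'/x + 2au/x² = 0` hold at `x`. -/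
theorem stmt_4 (ε a : ℂ) (hε : ε ^ 2 = 1) (u φ : ℝ → ℂ)
    (hu : ∀ y : ℝ, 0 < y → DifferentiableAt ℝ u y)
    (hu' : ∀ y : ℝ, 0 < y → DifferentiableAt ℝ (deriv u) y)
    (hφ : ∀ y : ℝ, 0 < y → DifferentiableAt ℝ φ y)
    (hφ' : ∀ y : ℝ, 0 < y → DifferentiableAt ℝ (deriv φ) y)
    (huz : ∀ y : ℝ, 0 < y → u y ≠ 0)
    (x : ℝ) (hx : 0 < x) (p q : ℝ → ℂ)
    (hpdef : p = deriv fun t : ℝ => u t * Complex.exp (Complex.I * φ t) / (t : ℂ))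
    (hqdef : q = deriv fun t : ℝ => u t * Complex.exp (-(Complex.I * φ t)) / (t : ℂ))
    (hpdiff : DifferentiableAt ℝ p x) (hqdiff : DifferentiableAt ℝ q x) :
    (-(ε * (x : ℂ) ^ 2 * deriv p x) / (4 * u x)
          + ε * (x : ℂ) ^ 2 * p x * deriv u x / (4 * (u x) ^ 2)
          - ε * (x : ℂ) * p x / (2 * u x)
          + Complex.I * ε * a * (x : ℂ) * p x / (2 * u x)
          - 2 * u x * Complex.exp (Complex.I * φ x) = 0
      ∧ -(ε * (x : ℂ) ^ 2 * deriv q x) / (4 * u x)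
          + ε * (x : ℂ) ^ 2 * q x * deriv u x / (4 * (u x) ^ 2)
          - ε * (x : ℂ) * q x / (2 * u x)
          - Complex.I * ε * a * (x : ℂ) * q x / (2 * u x)
          - 2 * u x * Complex.exp (-(Complex.I * φ x)) = 0)
      ↔ (-8 * ε * (u x) ^ 3 - u x * deriv u x + (x : ℂ) * (deriv u x) ^ 2
            - 2 * a * (u x) ^ 2 * deriv φ x + (x : ℂ) * (u x) ^ 2 * (deriv φ x) ^ 2
            - (x : ℂ) * u x * deriv (deriv u) x = 0
          ∧ u x * deriv (deriv φ) x + deriv u x * deriv φ x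
            - 2 * a * deriv u x / (x : ℂ) + 2 * a * u x / (x : ℂ) ^ 2 = 0) := by

  obtain ⟨hp, hdp⟩ := aux_deriv Complex.I u φ hu hu' hφ hφ' x hx p hpdef
  have hqdef' : q = deriv fun t : ℝ => u t * Complex.exp ((-Complex.I) * φ t) / (t : ℂ) := by
    have hfun : (fun t : ℝ => u t * Complex.exp (-(Complex.I * φ t)) / (t : ℂ))
        = fun t : ℝ => u t * Complex.exp ((-Complex.I) * φ t) / (t : ℂ) := by
      funext t; rw [neg_mul]
    rw [hqdef, hfun]
  obtain ⟨hq, hdq⟩ := aux_deriv (-Complex.I) u φ hu hu' hφ hφ' x hx q hqdef'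
  have hdp' : deriv p x =
      ((deriv (deriv u) x + Complex.I * deriv (deriv φ) x * u x
          + 2 * Complex.I * deriv φ x * deriv u x - (deriv φ x) ^ 2 * u x) * (x : ℂ) ^ 2
        - 2 * (deriv u x + Complex.I * deriv φ x * u x) * (x : ℂ)
        + 2 * u x) * Complex.exp (Complex.I * φ x) / (x : ℂ) ^ 3 := by
    linear_combination hdp
      + ((deriv φ x) ^ 2 * u x * Complex.exp (Complex.I * φ x) * (x : ℂ) ^ 2 / (x : ℂ) ^ 3) * Complex.I_sq
  have hneg : -(Complex.I * φ x) = (-Complex.I) * φ x := (neg_mul _ _).symm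
  have hq' : q x = ((deriv u x + (-Complex.I) * deriv φ x * u x) * (x : ℂ) - u x)
        * Complex.exp (-(Complex.I * φ x)) / (x : ℂ) ^ 2 := by
    rw [hneg]; exact hq
  have hdq' : deriv q x =
      ((deriv (deriv u) x + (-Complex.I) * deriv (deriv φ) x * u x
          + 2 * (-Complex.I) * deriv φ x * deriv u x - (deriv φ x) ^ 2 * u x) * (x : ℂ) ^ 2
        - 2 * (deriv u x + (-Complex.I) * deriv φ x * u x) * (x : ℂ)
        + 2 * u x) * Complex.exp (-(Complex.I * φ x)) / (x : ℂ) ^ 3 := by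
    rw [hneg]
    linear_combination hdq
      + ((deriv φ x) ^ 2 * u x * Complex.exp ((-Complex.I) * φ x) * (x : ℂ) ^ 2 / (x : ℂ) ^ 3) * Complex.I_sq
  have hXne : (x : ℂ) ≠ 0 := by exact_mod_cast ne_of_gt hx
  have hUne : u x ≠ 0 := huz x hx
  have hEne : Complex.exp (Complex.I * φ x) ≠ 0 := Complex.exp_ne_zero _
  have hE'ne : Complex.exp (-(Complex.I * φ x)) ≠ 0 := Complex.exp_ne_zero _
  have hEE : Complex.exp (Complex.I * φ x) * Complex.exp (-(Complex.I * φ x)) = 1 := by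
    rw [← Complex.exp_add]; simp
  have hI := Complex.I_sq
  have hεne : ε ≠ 0 := by
    intro h; rw [h] at hε; simp at hε
  have hcne : (4 * u x ^ 2 * (x:ℂ)) ≠ 0 :=
    mul_ne_zero (mul_ne_zero (by norm_num : (4:ℂ) ≠ 0) (pow_ne_zero 2 hUne)) hXne
  have hXinv : (x:ℂ) * ((x:ℂ))⁻¹ = 1 := mul_inv_cancel₀ hXne
  have hUinv : u x * (u x)⁻¹ = 1 := mul_inv_cancel₀ hUne
  set A : ℂ := -8 * ε * (u x) ^ 3 - u x * deriv u x + (x : ℂ) * (deriv u x) ^ 2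
      - 2 * a * (u x) ^ 2 * deriv φ x + (x : ℂ) * (u x) ^ 2 * (deriv φ x) ^ 2
      - (x : ℂ) * u x * deriv (deriv u) x with hAdef
  set B : ℂ := u x * deriv (deriv φ) x * (x:ℂ)^2 + deriv u x * deriv φ x * (x:ℂ)^2
      - 2 * a * deriv u x * (x:ℂ) + 2 * a * u x with hBdef
  have key1 : (-(ε * (x : ℂ) ^ 2 * deriv p x) / (4 * u x)
          + ε * (x : ℂ) ^ 2 * p x * deriv u x / (4 * (u x) ^ 2)
          - ε * (x : ℂ) * p x / (2 * u x)
          + Complex.I * ε * a * (x : ℂ) * p x / (2 * u x)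
          - 2 * u x * Complex.exp (Complex.I * φ x)) * (4 * u x ^ 2 * (x:ℂ))
      = ε * Complex.exp (Complex.I * φ x) * (A * (x:ℂ) - Complex.I * u x * B) := by
    rw [hp, hdp', hAdef, hBdef]
    linear_combination ((1) * (Complex.exp (Complex.I * φ x)) * (deriv u x)^2 * ((x:ℂ))^4 * (((x:ℂ))⁻¹)^2 * (ε) + (-1) * (Complex.exp (Complex.I * φ x)) * (u x) * (deriv (deriv u) x) * ((x:ℂ))^5 * (((x:ℂ))⁻¹)^3 * (ε) + (-3) * (Complex.exp (Complex.I * φ x)) * (u x) * (deriv u x) * ((x:ℂ))^3 * (((x:ℂ))⁻¹)^2 * (ε) + (2) * (Complex.exp (Complex.I * φ x)) * (u x) * (deriv u x) * ((x:ℂ))^4 * (((x:ℂ))⁻¹)^3 * (ε) + (1) * (Complex.exp (Complex.I * φ x)) * (u x) * ((u x)⁻¹) * (deriv u x)^2 * ((x:ℂ))^4 * (((x:ℂ))⁻¹)^2 * (ε) + (2) * (Complex.exp (Complex.I * φ x)) * (u x)^2 * ((x:ℂ))^2 * (((x:ℂ))⁻¹)^2 * (ε) + (-2) * (Complex.exp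 (Complex.I * φ x)) * (u x)^2 * ((x:ℂ))^3 * (((x:ℂ))⁻¹)^3 * (ε) + (1) * (Complex.exp (Complex.I * φ x)) * (u x)^2 * (deriv φ x)^2 * ((x:ℂ))^5 * (((x:ℂ))⁻¹)^3 * (ε) + (-1) * (Complex.exp (Complex.I * φ x)) * (u x)^2 * ((u x)⁻¹) * (deriv u x) * ((x:ℂ))^3 * (((x:ℂ))⁻¹)^2 * (ε) + (2) * (Complex.I) * (Complex.exp (Complex.I * φ x)) * (u x) * (deriv u x) * ((x:ℂ))^3 * (((x:ℂ))⁻¹)^2 * (a) * (ε) + (1) * (Complex.I) * (Complex.exp (Complex.I * φ x)) * (u x) * (deriv u x) * (deriv φ x) * ((x:ℂ))^4 * (((x:ℂ))⁻¹)^2 * (ε) + (-2) * (Complex.I) * (Complex.exp (Complex.I * φ x)) * (u x) * (deriv u x) * (deriv φ x) * ((x:ℂ))^5 * (((x:ℂ))⁻¹)^3 * (ε) + (-2) * (Complex.I) * (Complex.exp (Complex.I * φ x)) * (u x)^2 * ((x:ℂ))^2 * (((x:ℂ))⁻¹)^2 * (a) * (ε) + (-1) * (Complex.I) * (Complex.exp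 (Complex.I * φ x)) * (u x)^2 * (deriv (deriv φ) x) * ((x:ℂ))^5 * (((x:ℂ))⁻¹)^3 * (ε) + (-2) * (Complex.I) * (Complex.exp (Complex.I * φ x)) * (u x)^2 * (deriv φ x) * ((x:ℂ))^3 * (((x:ℂ))⁻¹)^2 * (ε) + (2) * (Complex.I) * (Complex.exp (Complex.I * φ x)) * (u x)^2 * (deriv φ x) * ((x:ℂ))^4 * (((x:ℂ))⁻¹)^3 * (ε) + (1) * (Complex.I) * (Complex.exp (Complex.I * φ x)) * (u x)^2 * ((u x)⁻¹) * (deriv u x) * (deriv φ x) * ((x:ℂ))^4 * (((x:ℂ))⁻¹)^2 * (ε) + (2) * (Complex.I)^2 * (Complex.exp (Complex.I * φ x)) * (u x)^2 * (deriv φ x) * ((x:ℂ))^3 * (((x:ℂ))⁻¹)^2 * (a) * (ε)) * hUinv + ((1) * (Complex.exp (Complex.I * φ x)) * (deriv u x)^2 * ((x:ℂ))^2 * (ε) + (1) * (Complex.exp (Complex.I * φ x)) * (deriv u x)^2 * ((x:ℂ))^3 * (((x:ℂ))⁻¹) * (ε) + (-1) * (Complex.exp (Complex.I * φ x)) * (u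 x) * (deriv (deriv u) x) * ((x:ℂ))^2 * (ε) + (-1) * (Complex.exp (Complex.I * φ x)) * (u x) * (deriv (deriv u) x) * ((x:ℂ))^3 * (((x:ℂ))⁻¹) * (ε) + (-1) * (Complex.exp (Complex.I * φ x)) * (u x) * (deriv (deriv u) x) * ((x:ℂ))^4 * (((x:ℂ))⁻¹)^2 * (ε) + (-1) * (Complex.exp (Complex.I * φ x)) * (u x) * (deriv u x) * ((x:ℂ)) * (ε) + (-1) * (Complex.exp (Complex.I * φ x)) * (u x) * (deriv u x) * ((x:ℂ))^2 * (((x:ℂ))⁻¹) * (ε) + (2) * (Complex.exp (Complex.I * φ x)) * (u x) * (deriv u x) * ((x:ℂ))^3 * (((x:ℂ))⁻¹)^2 * (ε) + (-2) * (Complex.exp (Complex.I * φ x)) * (u x)^2 * ((x:ℂ))^2 * (((x:ℂ))⁻¹)^2 * (ε) + (1) * (Complex.exp (Complex.I * φ x)) * (u x)^2 * (deriv φ x)^2 * ((x:ℂ))^2 * (ε) + (1) * (Complex.exp (Complex.I * φ x)) * (u x)^2 * (deriv φ x)^2 * ((x:ℂ))^3 * (((x:ℂ))⁻¹) * (ε)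 + (1) * (Complex.exp (Complex.I * φ x)) * (u x)^2 * (deriv φ x)^2 * ((x:ℂ))^4 * (((x:ℂ))⁻¹)^2 * (ε) + (2) * (Complex.I) * (Complex.exp (Complex.I * φ x)) * (u x) * (deriv u x) * ((x:ℂ)) * (a) * (ε) + (2) * (Complex.I) * (Complex.exp (Complex.I * φ x)) * (u x) * (deriv u x) * ((x:ℂ))^2 * (((x:ℂ))⁻¹) * (a) * (ε) + (-1) * (Complex.I) * (Complex.exp (Complex.I * φ x)) * (u x) * (deriv u x) * (deriv φ x) * ((x:ℂ))^2 * (ε) + (-1) * (Complex.I) * (Complex.exp (Complex.I * φ x)) * (u x) * (deriv u x) * (deriv φ x) * ((x:ℂ))^3 * (((x:ℂ))⁻¹) * (ε) + (-2) * (Complex.I) * (Complex.exp (Complex.I * φ x)) * (u x) * (deriv u x) * (deriv φ x) * ((x:ℂ))^4 * (((x:ℂ))⁻¹)^2 * (ε) + (-2) * (Complex.I) * (Complex.exp (Complex.I * φ x)) * (u x)^2 * (a) * (ε) + (-2) * (Complex.I) * (Complex.exp (Complex.I * φ x)) * (u x)^2 * ((x:ℂ)) * (((x:ℂ))⁻¹)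 * (a) * (ε) + (-1) * (Complex.I) * (Complex.exp (Complex.I * φ x)) * (u x)^2 * (deriv (deriv φ) x) * ((x:ℂ))^2 * (ε) + (-1) * (Complex.I) * (Complex.exp (Complex.I * φ x)) * (u x)^2 * (deriv (deriv φ) x) * ((x:ℂ))^3 * (((x:ℂ))⁻¹) * (ε) + (-1) * (Complex.I) * (Complex.exp (Complex.I * φ x)) * (u x)^2 * (deriv (deriv φ) x) * ((x:ℂ))^4 * (((x:ℂ))⁻¹)^2 * (ε) + (2) * (Complex.I) * (Complex.exp (Complex.I * φ x)) * (u x)^2 * (deriv φ x) * ((x:ℂ))^3 * (((x:ℂ))⁻¹)^2 * (ε) + (2) * (Complex.I)^2 * (Complex.exp (Complex.I * φ x)) * (u x)^2 * (deriv φ x) * ((x:ℂ)) * (a) * (ε) + (2) * (Complex.I)^2 * (Complex.exp (Complex.I * φ x)) * (u x)^2 * (deriv φ x) * ((x:ℂ))^2 * (((x:ℂ))⁻¹) * (a) * (ε)) * hXinv + ((2) * (Complex.exp (Complex.I * φ x)) * (u x)^2 * (deriv φ x) * ((x:ℂ)) * (a) * (ε)) * Complex.I_sq + ((8) * (Complex.exp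 (Complex.I * φ x)) * (u x)^3 * ((x:ℂ))) * hε
  have key2 : (-(ε * (x : ℂ) ^ 2 * deriv q x) / (4 * u x)
          + ε * (x : ℂ) ^ 2 * q x * deriv u x / (4 * (u x) ^ 2)
          - ε * (x : ℂ) * q x / (2 * u x)
          - Complex.I * ε * a * (x : ℂ) * q x / (2 * u x)
          - 2 * u x * Complex.exp (-(Complex.I * φ x))) * (4 * u x ^ 2 * (x:ℂ))
      = ε * Complex.exp (-(Complex.I * φ x)) * (A * (x:ℂ) + Complex.I * u x * B) := by
    rw [hq', hdq', hAdef, hBdef]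
    linear_combination ((1) * (Complex.exp (-(Complex.I * φ x))) * (deriv u x)^2 * ((x:ℂ))^4 * (((x:ℂ))⁻¹)^2 * (ε) + (-1) * (Complex.exp (-(Complex.I * φ x))) * (u x) * (deriv (deriv u) x) * ((x:ℂ))^5 * (((x:ℂ))⁻¹)^3 * (ε) + (-3) * (Complex.exp (-(Complex.I * φ x))) * (u x) * (deriv u x) * ((x:ℂ))^3 * (((x:ℂ))⁻¹)^2 * (ε) + (2) * (Complex.exp (-(Complex.I * φ x))) * (u x) * (deriv u x) * ((x:ℂ))^4 * (((x:ℂ))⁻¹)^3 * (ε) + (1) * (Complex.exp (-(Complex.I * φ x))) * (u x) * ((u x)⁻¹) * (deriv u x)^2 * ((x:ℂ))^4 * (((x:ℂ))⁻¹)^2 * (ε) + (2) * (Complex.exp (-(Complex.I * φ x))) * (u x)^2 * ((x:ℂ))^2 * (((x:ℂ))⁻¹)^2 * (ε) + (-2) * (Complex.exp (-(Complex.I * φ x))) * (u x)^2 * ((x:ℂ))^3 * (((x:ℂ))⁻¹)^3 * (ε) + (1) * (Complex.exp (-(Complex.I * φ x))) * (u x)^2 * (deriv φ x)^2 * ((x:ℂ))^5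 * (((x:ℂ))⁻¹)^3 * (ε) + (-1) * (Complex.exp (-(Complex.I * φ x))) * (u x)^2 * ((u x)⁻¹) * (deriv u x) * ((x:ℂ))^3 * (((x:ℂ))⁻¹)^2 * (ε) + (-2) * (Complex.I) * (Complex.exp (-(Complex.I * φ x))) * (u x) * (deriv u x) * ((x:ℂ))^3 * (((x:ℂ))⁻¹)^2 * (a) * (ε) + (-1) * (Complex.I) * (Complex.exp (-(Complex.I * φ x))) * (u x) * (deriv u x) * (deriv φ x) * ((x:ℂ))^4 * (((x:ℂ))⁻¹)^2 * (ε) + (2) * (Complex.I) * (Complex.exp (-(Complex.I * φ x))) * (u x) * (deriv u x) * (deriv φ x) * ((x:ℂ))^5 * (((x:ℂ))⁻¹)^3 * (ε) + (2) * (Complex.I) * (Complex.exp (-(Complex.I * φ x))) * (u x)^2 * ((x:ℂ))^2 * (((x:ℂ))⁻¹)^2 * (a) * (ε) + (1) * (Complex.I) * (Complex.exp (-(Complex.I * φ x))) * (u x)^2 * (deriv (deriv φ) x) * ((x:ℂ))^5 * (((x:ℂ))⁻¹)^3 * (ε) + (2) * (Complex.I) * (Complex.exp (-(Complex.I * φ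 x))) * (u x)^2 * (deriv φ x) * ((x:ℂ))^3 * (((x:ℂ))⁻¹)^2 * (ε) + (-2) * (Complex.I) * (Complex.exp (-(Complex.I * φ x))) * (u x)^2 * (deriv φ x) * ((x:ℂ))^4 * (((x:ℂ))⁻¹)^3 * (ε) + (-1) * (Complex.I) * (Complex.exp (-(Complex.I * φ x))) * (u x)^2 * ((u x)⁻¹) * (deriv u x) * (deriv φ x) * ((x:ℂ))^4 * (((x:ℂ))⁻¹)^2 * (ε) + (2) * (Complex.I)^2 * (Complex.exp (-(Complex.I * φ x))) * (u x)^2 * (deriv φ x) * ((x:ℂ))^3 * (((x:ℂ))⁻¹)^2 * (a) * (ε)) * hUinv + ((1) * (Complex.exp (-(Complex.I * φ x))) * (deriv u x)^2 * ((x:ℂ))^2 * (ε) + (1) * (Complex.exp (-(Complex.I * φ x))) * (deriv u x)^2 * ((x:ℂ))^3 * (((x:ℂ))⁻¹) * (ε) + (-1) * (Complex.exp (-(Complex.I * φ x))) * (u x) * (deriv (deriv u) x) * ((x:ℂ))^2 * (ε) + (-1) * (Complex.exp (-(Complex.I * φ x))) * (u x) * (deriv (deriv u) x) * ((x:ℂ))^3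 * (((x:ℂ))⁻¹) * (ε) + (-1) * (Complex.exp (-(Complex.I * φ x))) * (u x) * (deriv (deriv u) x) * ((x:ℂ))^4 * (((x:ℂ))⁻¹)^2 * (ε) + (-1) * (Complex.exp (-(Complex.I * φ x))) * (u x) * (deriv u x) * ((x:ℂ)) * (ε) + (-1) * (Complex.exp (-(Complex.I * φ x))) * (u x) * (deriv u x) * ((x:ℂ))^2 * (((x:ℂ))⁻¹) * (ε) + (2) * (Complex.exp (-(Complex.I * φ x))) * (u x) * (deriv u x) * ((x:ℂ))^3 * (((x:ℂ))⁻¹)^2 * (ε) + (-2) * (Complex.exp (-(Complex.I * φ x))) * (u x)^2 * ((x:ℂ))^2 * (((x:ℂ))⁻¹)^2 * (ε) + (1) * (Complex.exp (-(Complex.I * φ x))) * (u x)^2 * (deriv φ x)^2 * ((x:ℂ))^2 * (ε) + (1) * (Complex.exp (-(Complex.I * φ x))) * (u x)^2 * (deriv φ x)^2 * ((x:ℂ))^3 * (((x:ℂ))⁻¹) * (ε) + (1) * (Complex.exp (-(Complex.I * φ x))) * (u x)^2 * (deriv φ x)^2 * ((x:ℂ))^4 * (((x:ℂ))⁻¹)^2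 * (ε) + (-2) * (Complex.I) * (Complex.exp (-(Complex.I * φ x))) * (u x) * (deriv u x) * ((x:ℂ)) * (a) * (ε) + (-2) * (Complex.I) * (Complex.exp (-(Complex.I * φ x))) * (u x) * (deriv u x) * ((x:ℂ))^2 * (((x:ℂ))⁻¹) * (a) * (ε) + (1) * (Complex.I) * (Complex.exp (-(Complex.I * φ x))) * (u x) * (deriv u x) * (deriv φ x) * ((x:ℂ))^2 * (ε) + (1) * (Complex.I) * (Complex.exp (-(Complex.I * φ x))) * (u x) * (deriv u x) * (deriv φ x) * ((x:ℂ))^3 * (((x:ℂ))⁻¹) * (ε) + (2) * (Complex.I) * (Complex.exp (-(Complex.I * φ x))) * (u x) * (deriv u x) * (deriv φ x) * ((x:ℂ))^4 * (((x:ℂ))⁻¹)^2 * (ε) + (2) * (Complex.I) * (Complex.exp (-(Complex.I * φ x))) * (u x)^2 * (a) * (ε) + (2) * (Complex.I) * (Complex.exp (-(Complex.I * φ x))) * (u x)^2 * ((x:ℂ)) * (((x:ℂ))⁻¹) * (a) * (ε) + (1) * (Complex.I) * (Complex.exp (-(Complex.I * φ x))) * (u x)^2 * (deriv (deriv φ)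 x) * ((x:ℂ))^2 * (ε) + (1) * (Complex.I) * (Complex.exp (-(Complex.I * φ x))) * (u x)^2 * (deriv (deriv φ) x) * ((x:ℂ))^3 * (((x:ℂ))⁻¹) * (ε) + (1) * (Complex.I) * (Complex.exp (-(Complex.I * φ x))) * (u x)^2 * (deriv (deriv φ) x) * ((x:ℂ))^4 * (((x:ℂ))⁻¹)^2 * (ε) + (-2) * (Complex.I) * (Complex.exp (-(Complex.I * φ x))) * (u x)^2 * (deriv φ x) * ((x:ℂ))^3 * (((x:ℂ))⁻¹)^2 * (ε) + (2) * (Complex.I)^2 * (Complex.exp (-(Complex.I * φ x))) * (u x)^2 * (deriv φ x) * ((x:ℂ)) * (a) * (ε) + (2) * (Complex.I)^2 * (Complex.exp (-(Complex.I * φ x))) * (u x)^2 * (deriv φ x) * ((x:ℂ))^2 * (((x:ℂ))⁻¹) * (a) * (ε)) * hXinv + ((2) * (Complex.exp (-(Complex.I * φ x))) * (u x)^2 * (deriv φ x) * ((x:ℂ)) * (a) * (ε)) * Complex.I_sq + ((8) * (Complex.exp (-(Complex.I * φ x))) * (u x)^3 * ((x:ℂ))) * hε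
  have e1 : ((-(ε * (x : ℂ) ^ 2 * deriv p x) / (4 * u x)
          + ε * (x : ℂ) ^ 2 * p x * deriv u x / (4 * (u x) ^ 2)
          - ε * (x : ℂ) * p x / (2 * u x)
          + Complex.I * ε * a * (x : ℂ) * p x / (2 * u x)
          - 2 * u x * Complex.exp (Complex.I * φ x)) = 0) ↔ (A * (x:ℂ) - Complex.I * u x * B = 0) := by
    constructor
    · intro h
      have h' : ε * Complex.exp (Complex.I * φ x) * (A * (x:ℂ) - Complex.I * u x * B) = 0 := by
        rw [← key1, h, zero_mul]
      rcases mul_eq_zero.mp h' with h'' | h''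
      · exact absurd h'' (mul_ne_zero hεne hEne)
      · exact h''
    · intro h
      have h' : (-(ε * (x : ℂ) ^ 2 * deriv p x) / (4 * u x)
          + ε * (x : ℂ) ^ 2 * p x * deriv u x / (4 * (u x) ^ 2)
          - ε * (x : ℂ) * p x / (2 * u x)
          + Complex.I * ε * a * (x : ℂ) * p x / (2 * u x)
          - 2 * u x * Complex.exp (Complex.I * φ x)) * (4 * u x ^ 2 * (x:ℂ)) = 0 := by rw [key1, h, mul_zero]
      exact (mul_eq_zero.mp h').resolve_right hcne
  have e2 : ((-(ε * (x : ℂ) ^ 2 * deriv q x) / (4 * u x)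
          + ε * (x : ℂ) ^ 2 * q x * deriv u x / (4 * (u x) ^ 2)
          - ε * (x : ℂ) * q x / (2 * u x)
          - Complex.I * ε * a * (x : ℂ) * q x / (2 * u x)
          - 2 * u x * Complex.exp (-(Complex.I * φ x))) = 0) ↔ (A * (x:ℂ) + Complex.I * u x * B = 0) := by
    constructor
    · intro h
      have h' : ε * Complex.exp (-(Complex.I * φ x)) * (A * (x:ℂ) + Complex.I * u x * B) = 0 := by
        rw [← key2, h, zero_mul]
      rcases mul_eq_zero.mp h' with h'' | h''
      · exact absurd h'' (mul_ne_zero hεne hE'ne)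
      · exact h''
    · intro h
      have h' : (-(ε * (x : ℂ) ^ 2 * deriv q x) / (4 * u x)
          + ε * (x : ℂ) ^ 2 * q x * deriv u x / (4 * (u x) ^ 2)
          - ε * (x : ℂ) * q x / (2 * u x)
          - Complex.I * ε * a * (x : ℂ) * q x / (2 * u x)
          - 2 * u x * Complex.exp (-(Complex.I * φ x))) * (4 * u x ^ 2 * (x:ℂ)) = 0 := by rw [key2, h, mul_zero]
      exact (mul_eq_zero.mp h').resolve_right hcne
  have eS : (u x * deriv (deriv φ) x + deriv u x * deriv φ x
        - 2 * a * deriv u x / (x : ℂ) + 2 * a * u x / (x : ℂ) ^ 2 = 0) ↔ (B = 0) := by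
    have hS : (u x * deriv (deriv φ) x + deriv u x * deriv φ x
        - 2 * a * deriv u x / (x : ℂ) + 2 * a * u x / (x : ℂ) ^ 2) * (x:ℂ)^2 = B := by
      rw [hBdef]
      linear_combination (2 * a * u x + 2 * a * u x * (x:ℂ) * ((x:ℂ))⁻¹
        - 2 * a * deriv u x * (x:ℂ)) * hXinv
    constructor
    · intro h; rw [← hS, h, zero_mul]
    · intro h
      have h' := hS.trans h
      exact (mul_eq_zero.mp h').resolve_right (pow_ne_zero 2 hXne)
  rw [e1, e2, eS]
  constructor
  · rintro ⟨h1, h2⟩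
    have hA : A * (x:ℂ) = 0 := by linear_combination h1 / 2 + h2 / 2
    have hB : Complex.I * u x * B = 0 := by linear_combination h2 / 2 - h1 / 2
    refine ⟨(mul_eq_zero.mp hA).resolve_right hXne, ?_⟩
    rcases mul_eq_zero.mp hB with h | h
    · exact absurd h (mul_ne_zero Complex.I_ne_zero hUne)
    · exact h
  · rintro ⟨h1, h2⟩
    exact ⟨by linear_combination (x:ℂ) * h1 - Complex.I * u x * h2,
      by linear_combination (x:ℂ) * h1 + Complex.I * u x * h2⟩
end

section
/- Fix ε, a ∈ ℂ with ε² = 1, and let x > 0. Let u, E, p, q : (0,∞) → ℂ be differentiable at x with u(x) ≠ 0 and E(x) ≠ 0, and suppose that equations (iii) and (v) of the D7 compatibility system with parameters (ε, a) hold at x. Then −i·u(x)E'(x)/E(x) = −(i/2)x·p(x)/E(x) + (i/2)x·q(x)E(x). Equivalently, the quantity uφ' = −iuE'/E satisfies uφ' − 2au/x = −2au/x − (i/2)xp/E + (i/2)xqE, i.e., the integration constant b = uφ' − 2au/x admits the derivative-free expression b = −2au/x − (i/2)xp e^{−iφ} + (i/2)xq e^{iφ}. -/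
/-! Multiplying (v) by `E²` and adding (iii), the terms in `u'` and in `u/x` cancel; as `ε² = 1`,
what remains is `i u E' = (i/2) x (p − q E²)`, and dividing by `−E` gives the claim. -/

theorem neg_mul_div_eq_of_compat {K : Type*} [Field K] [CharZero K]
    (i c x u E E' u' p q : K) (hE : E ≠ 0)
    (h3 : i / 2 * u * E' + i / 2 * u' * E - c * u * E - i / 2 * x * p = 0)
    (h5 : i / 2 * u * E' / E ^ 2 - i / 2 * u' / E + c * u / E + i / 2 * x * q = 0) :
    -i * u * E' / E = -(i / 2) * x * p / E + i / 2 * x * q * E := by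
  have h5_mul_sq : i / 2 * u * E' - i / 2 * u' * E + c * u * E + i / 2 * x * q * E ^ 2 = 0 := by
    field_simp at h5
    linear_combination h5 / 2
  have h_elim : i * u * E' = i / 2 * x * (p - q * E ^ 2) := by
    linear_combination h3 + h5_mul_sq
  field_simp
  linear_combination -2 * h_elim

theorem stmt_5_general (ε : ℂ) (hε : ε ^ 2 = 1) (x : ℝ)
    (u E p q : ℝ → ℂ)
    (hEx : E x ≠ 0)
    (h3 : (Complex.I / 2) * u x * deriv E x + (Complex.I / 2) * deriv u x * E x
      - (Complex.I / (2 * (x : ℂ))) * u x * E x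
      - (Complex.I * ε ^ 2 / 2) * (x : ℂ) * p x = 0)
    (h5 : (Complex.I / 2) * u x * deriv E x / (E x) ^ 2
      - (Complex.I / 2) * deriv u x / E x
      + (Complex.I / (2 * (x : ℂ))) * u x / E x
      + (Complex.I * ε ^ 2 / 2) * (x : ℂ) * q x = 0) :
    -Complex.I * u x * deriv E x / E x =
      -(Complex.I / 2) * (x : ℂ) * p x / E x
        + (Complex.I / 2) * (x : ℂ) * q x * E x := by
  rw [hε, mul_one] at h3 h5
  exact neg_mul_div_eq_of_compat _ _ _ _ _ _ _ _ _ hEx h3 h5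

/-- From equations (iii) and (v) of the D7 compatibility system with parameters
`(ε, a)` (with `ε² = 1`) one gets the derivative-free expression
`−i u E'/E = −(i/2) x p/E + (i/2) x q E` for the quantity `uφ' = −iuE'/E`;
equivalently, the integration constant `b = uφ' − 2au/x` admits the derivative-free
expression `b = −2au/x − (i/2)xp e^{−iφ} + (i/2)xq e^{iφ}`. -/
theorem stmt_5 (ε a : ℂ) (hε : ε ^ 2 = 1) (x : ℝ) (hx : 0 < x)
    (u E p q : ℝ → ℂ)
    (hu : DifferentiableAt ℝ u x) (hE : DifferentiableAt ℝ E x)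
    (hp : DifferentiableAt ℝ p x) (hq : DifferentiableAt ℝ q x)
    (hux : u x ≠ 0) (hEx : E x ≠ 0)
    (h3 : (Complex.I / 2) * u x * deriv E x + (Complex.I / 2) * deriv u x * E x
      - (Complex.I / (2 * (x : ℂ))) * u x * E x
      - (Complex.I * ε ^ 2 / 2) * (x : ℂ) * p x = 0)
    (h5 : (Complex.I / 2) * u x * deriv E x / (E x) ^ 2
      - (Complex.I / 2) * deriv u x / E x
      + (Complex.I / (2 * (x : ℂ))) * u x / E x
      + (Complex.I * ε ^ 2 / 2) * (x : ℂ) * q x = 0) :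
    -Complex.I * u x * deriv E x / E x =
      -(Complex.I / 2) * (x : ℂ) * p x / E x
        + (Complex.I / 2) * (x : ℂ) * q x * E x :=
  stmt_5_general ε hε x u E p q hEx h3 h5
end

section
/- Let Λ, ω ∈ ℂ with Λ ≠ 0 and ω³ = −(9/4)Λ². Let f : ℂ → ℂ be twice differentiable and satisfy Airy's equation f''(ξ) = ξ·f(ξ) for all ξ ∈ ℂ. Define ξ(Z) := ω(1 + iZ²/Λ), D(Z) := f(ξ(Z)), and S(Z) := (2iω/(3Λ))·f'(ξ(Z)). Then D'(Z) = 3Z·S(Z) and S'(Z) = (3Z + 3iZ³/Λ)·D(Z) for all Z ∈ ℂ. -/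
/-!
Both equations are the chain rule applied to `ξ(Z) = ω(1 + iZ²/Λ)`, whose derivative is
`2iωZ/Λ`. For `S` Airy's equation turns `f''(ξ)` into `ξ f(ξ)`, and the normalisation
`ω³ = −(9/4)Λ²` makes the resulting coefficient `(2iω/(3Λ)) · ξ · 2iωZ/Λ` equal to
`3Z + 3iZ³/Λ`.
-/

open Complex

theorem hasDerivAt_mul_one_add_mul_sq_div {𝕜 : Type*} [NontriviallyNormedField 𝕜]
    (ω a Λ Z : 𝕜) :
    HasDerivAt (fun z : 𝕜 => ω * (1 + a * z ^ 2 / Λ)) (2 * a * ω * Z / Λ) Z := by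
  refine ((((hasDerivAt_pow 2 Z).const_mul a).div_const Λ).const_add 1).const_mul ω
    |>.congr_deriv ?_
  norm_num
  ring

theorem airy_seed_coeff_eq {Λ ω : ℂ} (hΛ : Λ ≠ 0) (hω : ω ^ 3 = -(9 / 4) * Λ ^ 2) (Z : ℂ) :
    2 * I * ω / (3 * Λ) * (ω * (1 + I * Z ^ 2 / Λ)) * (2 * I * ω * Z / Λ)
      = 3 * Z + 3 * I * Z ^ 3 / Λ := by
  -- as `i² = -1`, the left side is `-(4/3) ω³ Z (1 + iZ²/Λ) / Λ²`
  field_simp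
  linear_combination (-4 * Z * (Λ + I * Z ^ 2)) * hω + (4 * ω ^ 3 * Z * (Λ + I * Z ^ 2)) * I_sq

/-- If `f` solves Airy's equation `f'' = ξf` and `ω³ = −(9/4)Λ²`, then
`D(Z) = f(ω(1 + iZ²/Λ))` and `S(Z) = (2iω/(3Λ)) f'(ω(1 + iZ²/Λ))` solve the
first-order system `D' = 3ZS`, `S' = (3Z + 3iZ³/Λ)D` coming from the x-equation
of the Painlevé-III (D7) Lax pair for the seed solution. -/
theorem stmt_9 (Λ ω : ℂ) (hΛ : Λ ≠ 0) (hω : ω ^ 3 = -(9 / 4) * Λ ^ 2)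
    (f : ℂ → ℂ) (hf : Differentiable ℂ f) (hf' : Differentiable ℂ (deriv f))
    (hairy : ∀ ξ : ℂ, deriv (deriv f) ξ = ξ * f ξ) :
    ∀ Z : ℂ,
      deriv (fun z => f (ω * (1 + Complex.I * z ^ 2 / Λ))) Z
        = 3 * Z * ((2 * Complex.I * ω / (3 * Λ))
            * deriv f (ω * (1 + Complex.I * Z ^ 2 / Λ)))
      ∧ deriv (fun z => (2 * Complex.I * ω / (3 * Λ))
            * deriv f (ω * (1 + Complex.I * z ^ 2 / Λ))) Z
        = (3 * Z + 3 * Complex.I * Z ^ 3 / Λ)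
            * f (ω * (1 + Complex.I * Z ^ 2 / Λ)) := by
  intro Z
  have hξ := hasDerivAt_mul_one_add_mul_sq_div ω I Λ Z
  constructor
  · refine ((hf _).hasDerivAt.comp Z hξ).deriv.trans ?_
    field_simp
  · refine (((hf' _).hasDerivAt.comp Z hξ).const_mul _).deriv.trans ?_
    rw [hairy, ← airy_seed_coeff_eq hΛ hω Z]
    ring
end

section
/- Let y ∈ ℂ with y ≠ 0, let I ⊆ ℝ be an open interval, and let U : I → ℂ be twice differentiable and nonvanishing with U''(z) = U'(z)²/U(z) + (8/y)U(z)² + 2/y − 1/U(z) for all z ∈ I. Then the function z ↦ U'(z)²/(2U(z)²) − (8/y)U(z) + 2/(yU(z)) − 1/(2U(z)²) has zero derivative on I; consequently there exists a constant E ∈ ℂ such that U'(z)² = (16/y)U(z)³ + 2E·U(z)² − (4/y)U(z) + 1 for all z ∈ I. -/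
private lemma stmt_14_aux (y u u' c : ℂ) (hy : y ≠ 0) (hu : u ≠ 0)
    (h : u' ^ 2 / (2 * u ^ 2) - 8 / y * u + 2 / (y * u) - 1 / (2 * u ^ 2) = c) :
    u' ^ 2 = 16 / y * u ^ 3 + 2 * c * u ^ 2 - 4 / y * u + 1 := by
  field_simp at h
  rw [sub_eq_iff_eq_add] at h
  have hy' : y * y⁻¹ = 1 := mul_inv_cancel₀ hy
  linear_combination y⁻¹ * h + (-u' ^ 2 + 2 * c * u ^ 2 + 1) * hy'


/-- First integral of the autonomous approximating equation
`U'' = (U')²/U + (8/y)U² + 2/y − 1/U`: the function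
`U'²/(2U²) − (8/y)U + 2/(yU) − 1/(2U²)` has zero derivative on the open interval `I`,
so there is a constant `E` with `U'² = (16/y)U³ + 2EU² − (4/y)U + 1` on `I`. -/
theorem stmt_14 (y : ℂ) (hy : y ≠ 0) (I : Set ℝ)
    (hIopen : IsOpen I) (hIconn : IsPreconnected I)
    (U : ℝ → ℂ)
    (hU : ∀ z ∈ I, DifferentiableAt ℝ U z)
    (hU' : ∀ z ∈ I, DifferentiableAt ℝ (deriv U) z)
    (hUn : ∀ z ∈ I, U z ≠ 0)
    (hode : ∀ z ∈ I, deriv (deriv U) z =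
      (deriv U z) ^ 2 / U z + (8 / y) * (U z) ^ 2 + 2 / y - 1 / U z) :
    (∀ z ∈ I,
      deriv (fun t => (deriv U t) ^ 2 / (2 * (U t) ^ 2) - (8 / y) * U t
        + 2 / (y * U t) - 1 / (2 * (U t) ^ 2)) z = 0)
    ∧ ∃ E : ℂ, ∀ z ∈ I,
        (deriv U z) ^ 2 =
          (16 / y) * (U z) ^ 3 + 2 * E * (U z) ^ 2 - (4 / y) * U z + 1 := by
  have key : ∀ z ∈ I, HasDerivAt (fun t => (deriv U t) ^ 2 / (2 * (U t) ^ 2) - (8 / y) * U t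
        + 2 / (y * U t) - 1 / (2 * (U t) ^ 2)) 0 z := by
    intro z hz
    have hu := (hU z hz).hasDerivAt
    have hu' := (hU' z hz).hasDerivAt
    have hUz := hUn z hz
    have hyu : y * U z ≠ 0 := mul_ne_zero hy hUz
    have h2u2 : (2 : ℂ) * (U z) ^ 2 ≠ 0 := mul_ne_zero two_ne_zero (pow_ne_zero _ hUz)
    have hA : HasDerivAt (fun t => (deriv U t) ^ 2)
        (2 * deriv U z * deriv (deriv U) z) z := by
      have h := hu'.mul hu'
      have he : (fun t => (deriv U t) ^ 2) = fun t => deriv U t * deriv U t := by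
        ext t; ring
      rw [he]; exact h.congr_deriv (by ring)
    have hB : HasDerivAt (fun t => 2 * (U t) ^ 2) (4 * U z * deriv U z) z := by
      have h := (hu.mul hu).const_mul (2 : ℂ)
      have he : (fun t => 2 * (U t) ^ 2) = fun t => 2 * (U t * U t) := by
        ext t; ring
      rw [he]; exact h.congr_deriv (by ring)
    have h1 := hA.div hB h2u2
    have h2 := hu.const_mul (8 / y)
    have hyU := hu.const_mul y
    have h3 := (hasDerivAt_const z (2 : ℂ)).div hyU hyu
    have h4 := (hasDerivAt_const z (1 : ℂ)).div hB h2u2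
    have hT := ((h1.sub h2).add h3).sub h4
    refine hT.congr_deriv ?_
    rw [hode z hz]
    field_simp
    ring_nf
  refine ⟨fun z hz => (key z hz).deriv, ?_⟩
  rcases I.eq_empty_or_nonempty with h | ⟨z₀, hz₀⟩
  · exact ⟨0, by simp [h]⟩
  · refine ⟨(deriv U z₀) ^ 2 / (2 * (U z₀) ^ 2) - (8 / y) * U z₀
      + 2 / (y * U z₀) - 1 / (2 * (U z₀) ^ 2), fun z hz => ?_⟩
    have hloc : IsLocallyConstant
        (fun p : I => (deriv U p.1) ^ 2 / (2 * (U p.1) ^ 2) - (8 / y) * U p.1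
          + 2 / (y * U p.1) - 1 / (2 * (U p.1) ^ 2)) := by
      rw [IsLocallyConstant.iff_exists_open]
      rintro ⟨x, hx⟩
      obtain ⟨ε, hε, hball⟩ := Metric.isOpen_iff.1 hIopen x hx
      refine ⟨Subtype.val ⁻¹' Metric.ball x ε,
        Metric.isOpen_ball.preimage continuous_subtype_val,
        by simpa using hε, ?_⟩
      rintro ⟨x', hx'⟩ hmem
      have hconv := convex_ball x ε
      have hdiff : DifferentiableOn ℝ
          (fun t => (deriv U t) ^ 2 / (2 * (U t) ^ 2) - (8 / y) * U t
            + 2 / (y * U t) - 1 / (2 * (U t) ^ 2)) (Metric.ball x ε) :=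
        fun t ht => ((key t (hball ht)).differentiableAt).differentiableWithinAt
      have hfd : ∀ t ∈ Metric.ball x ε, fderivWithin ℝ
          (fun t => (deriv U t) ^ 2 / (2 * (U t) ^ 2) - (8 / y) * U t
            + 2 / (y * U t) - 1 / (2 * (U t) ^ 2)) (Metric.ball x ε) t = 0 := by
        intro t ht
        have h0 : HasFDerivAt
            (fun t => (deriv U t) ^ 2 / (2 * (U t) ^ 2) - (8 / y) * U t
              + 2 / (y * U t) - 1 / (2 * (U t) ^ 2))
            (ContinuousLinearMap.smulRight (1 : ℝ →L[ℝ] ℝ) (0 : ℂ)) t :=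
          (key t (hball ht)).hasFDerivAt
        rw [fderivWithin_of_isOpen Metric.isOpen_ball ht, h0.fderiv]
        ext; simp
      exact hconv.is_const_of_fderivWithin_eq_zero hdiff hfd
        (by simpa using hmem) (Metric.mem_ball_self hε)
    haveI : PreconnectedSpace I := Subtype.preconnectedSpace hIconn
    have hconst := hloc.apply_eq_of_preconnectedSpace ⟨z, hz⟩ ⟨z₀, hz₀⟩
    simp only at hconst
    exact stmt_14_aux y (U z) (deriv U z) _ hy (hUn z hz) hconst
end
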